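/- Let Q=(V,E,s,t) be a finite quiver without cycles of length m, with starting set S and associated quiver Q'. Then Path(Q) is the disjoint union of S and Path(Q'): every path of Q of positive length either is an arrow in S or is a path of Q', and no path is both. -/

import Mathlib

open scoped Classical

noncomputable section

variable {V E : Type*}

/-- A (positive-length) path in the quiver `(V, E, s, t)`: a nonempty list of arrows
in which consecutive arrows are composable, i.e. `t αᵢ = s αᵢ₊₁`. -/
def IsPath (s t : E → V) (l : List E) : Prop :=
  l ≠ [] ∧ l.Chain' (fun a b => t a = s b)

/-- The source of a (nonempty) list of arrows, as an `Option`. -/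
def src? (s : E → V) (l : List E) : Option V := l.head?.map s

/-- The target of a (nonempty) list of arrows, as an `Option`. -/
def tgt? (t : E → V) (l : List E) : Option V := l.getLast?.map t

/-- The quiver has no cycles: there is no path whose source equals its target. -/
def NoCycles (s t : E → V) : Prop :=
  ∀ l : List E, IsPath s t l → src? s l ≠ tgt? t l

/-- `m` is the maximum of the lengths of paths of the quiver (the length of the quiver). -/
def IsMaxPathLen (s t : E → V) (m : ℕ) : Prop :=
  (∃ l : List E, IsPath s t l ∧ l.length = m) ∧ ∀ l : List E, IsPath s t l → l.length ≤ m

/-- The set `Path(Q)` of all paths of length `≥ 1`, as a subtype of lists of arrows. -/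
abbrev PathQ (s t : E → V) := {l : List E // IsPath s t l}

/-- The underlying vector space of the Lie algebra `n_Q` obtained from the quiver:
the real vector space with basis `Path(Q)`. -/
abbrev nQ (s t : E → V) := PathQ s t →₀ ℝ

/-- The Lie bracket of two basis paths: `[x, y] = xy` if the concatenation `xy` is a path,
`[x, y] = -yx` if the concatenation `yx` is a path, and `[x, y] = 0` otherwise. -/
def braBasis (s t : E → V) (x y : PathQ s t) : nQ s t :=
  if h : IsPath s t (x.val ++ y.val) then Finsupp.single ⟨x.val ++ y.val, h⟩ 1
  else if h' : IsPath s t (y.val ++ x.val) then -Finsupp.single ⟨y.val ++ x.val, h'⟩ 1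
  else 0

/-- The Lie bracket of `n_Q`, extended bilinearly from basis paths. -/
def bra (s t : E → V) (u v : nQ s t) : nQ s t :=
  u.sum fun x cx => v.sum fun y cy => (cx * cy) • braBasis s t x y

/-- The span of all brackets of elements of two subspaces of `n_Q`. -/
def braSpan (s t : E → V) (M N : Submodule ℝ (nQ s t)) : Submodule ℝ (nQ s t) :=
  Submodule.span ℝ {z | ∃ u ∈ M, ∃ v ∈ N, z = bra s t u v}

/-- The starting set `S` of a quiver of length `m`: the set of arrows `a` such that
`a x` is a path of length `m` for some path `x`. -/
def startSet (s t : E → V) (m : ℕ) : Set E :=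
  {a | ∃ x : List E, IsPath s t x ∧ IsPath s t (a :: x) ∧ (a :: x).length = m}

/-- The arrow set `E' = (E ∖ S) ∪ {ab ∈ Path(Q) : a ∈ S, b ∈ E}` of the quiver `Q'`,
realized as a set of lists of arrows of `Q`. -/
def edgesQ' (s t : E → V) (m : ℕ) : Set (List E) :=
  {l | (∃ a : E, a ∉ startSet s t m ∧ l = [a]) ∨
       (∃ a b : E, a ∈ startSet s t m ∧ IsPath s t [a, b] ∧ l = [a, b])}

/-- `L` is a decomposition of the list `l` of arrows as a path of the quiver `Q'`:
a nonempty chain of consecutively composable `Q'`-arrows whose concatenation is `l`. -/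
def IsDecompQ' (s t : E → V) (m : ℕ) (L : List (List E)) (l : List E) : Prop :=
  L ≠ [] ∧ (∀ p ∈ L, p ∈ edgesQ' s t m) ∧
    L.Chain' (fun p q => tgt? t p = src? s q) ∧ L.flatten = l

/-- `l` underlies a path of the quiver `Q'`. -/
def IsPathQ' (s t : E → V) (m : ℕ) (l : List E) : Prop :=
  ∃ L : List (List E), IsDecompQ' s t m L l

/-- `f : E → E` is an automorphism of the quiver `(V, E, s, t)`. -/
def IsQuivAut (s t : E → V) (f : E → E) : Prop :=
  Function.Bijective f ∧ ∀ x y : E, (t x = s y ↔ t (f x) = s (f y))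

/-- `g` is an automorphism of the quiver whose arrow set is the set `ES` of lists of
arrows of `Q` (such as the quiver `Q'` with arrow set `edgesQ'`). -/
def IsQuivAutOn (s t : E → V) (ES : Set (List E)) (g : List E → List E) : Prop :=
  Set.BijOn g ES ES ∧
    ∀ p ∈ ES, ∀ q ∈ ES, (tgt? t p = src? s q ↔ tgt? t (g p) = src? s (g q))

/-- The subspace `n' = span Path(Q')` of `n_Q`. -/
def nQ'span (s t : E → V) (m : ℕ) : Submodule ℝ (nQ s t) :=
  Submodule.span ℝ {u | ∃ p : PathQ s t, IsPathQ' s t m p.val ∧ u = Finsupp.single p 1}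

/-- A single arrow, regarded as a path of length one. -/
def edgePath (s t : E → V) (a : E) : PathQ s t :=
  ⟨[a], ⟨List.cons_ne_nil _ _, by first | exact List.isChain_singleton _ | exact List.chain'_singleton _ | constructor⟩⟩

/-! An arrow of `S` can only be the first arrow of a path: otherwise the arrows before it,
followed by a path of length `m` starting with it, would form a path longer than `m`. So a path
`a :: r` is either a single arrow of `S`, or the `Q'`-arrow `[a, b]` (when `a ∈ S`) followed by
the arrows of `r` after `b`, each a `Q'`-arrow on its own, or (when `a ∉ S`) a chain of one-arrow
`Q'`-arrows. Conversely a `Q'`-path flattens to a path of `Q`, and it is never a single arrow of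
`S`, since its first `Q'`-arrow would then be `[a]` with `a ∉ S`. -/

section Paths

variable {s t : E → V}

lemma isPath_singleton (a : E) : IsPath s t [a] :=
  ⟨List.cons_ne_nil _ _, List.isChain_singleton _⟩

lemma src?_append_of_ne_nil {l₁ : List E} (l₂ : List E) (h : l₁ ≠ []) :
    src? s (l₁ ++ l₂) = src? s l₁ := by
  simp only [src?, List.head?_append_of_ne_nil _ h]

lemma isPath_append_iff {l₁ l₂ : List E} (h₁ : l₁ ≠ []) (h₂ : l₂ ≠ []) :
    IsPath s t (l₁ ++ l₂) ↔ IsPath s t l₁ ∧ IsPath s t l₂ ∧ tgt? t l₁ = src? s l₂ := by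
  obtain ⟨x, hx⟩ := Option.isSome_iff_exists.1 (List.getLast?_isSome.2 h₁)
  obtain ⟨y, l₂, rfl⟩ := List.exists_cons_of_ne_nil h₂
  simp [IsPath, List.Chain', tgt?, src?, List.isChain_append, hx, h₁, eq_comm]

lemma isPath_flatten {L : List (List E)} (hL : L ≠ []) (hpath : ∀ p ∈ L, IsPath s t p)
    (hchain : L.IsChain fun p q => tgt? t p = src? s q) : IsPath s t L.flatten := by
  induction L with
  | nil => exact absurd rfl hL
  | cons p L ih =>
    have hp := hpath p List.mem_cons_self
    rcases L with _ | ⟨q, L⟩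
    · simpa using hp
    have hq := hpath q (by simp)
    have htail : IsPath s t (q :: L).flatten :=
      ih (List.cons_ne_nil _ _) (fun r hr => hpath r (List.mem_cons_of_mem _ hr)) hchain.tail
    rw [List.flatten_cons, isPath_append_iff hp.1 htail.1]
    refine ⟨hp, htail, ?_⟩
    rw [List.flatten_cons, src?_append_of_ne_nil _ hq.1]
    exact (List.isChain_cons_cons.1 hchain).1

end Paths

section QuiverQ'

variable {s t : E → V} {m : ℕ}

lemma isPath_of_mem_edgesQ' {p : List E} (hp : p ∈ edgesQ' s t m) : IsPath s t p := by
  rcases hp with ⟨a, -, rfl⟩ | ⟨a, b, -, hab, rfl⟩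
  exacts [isPath_singleton a, hab]

lemma singleton_mem_edgesQ'_iff {a : E} : [a] ∈ edgesQ' s t m ↔ a ∉ startSet s t m := by
  simp [edgesQ']

lemma IsPathQ'.isPath {l : List E} (h : IsPathQ' s t m l) : IsPath s t l := by
  obtain ⟨L, hL, hedges, hchain, rfl⟩ := h
  exact isPath_flatten hL (fun p hp => isPath_of_mem_edgesQ' (hedges p hp)) hchain

lemma isPathQ'_of_mem_edgesQ' {p : List E} (hp : p ∈ edgesQ' s t m) : IsPathQ' s t m p :=
  ⟨[p], List.cons_ne_nil _ _, by simpa using hp, List.isChain_singleton _, by simp⟩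

lemma IsPathQ'.edge_append {p l : List E} (hp : p ∈ edgesQ' s t m) (hl : IsPathQ' s t m l)
    (hpl : IsPath s t (p ++ l)) : IsPathQ' s t m (p ++ l) := by
  obtain ⟨L, hL, hedges, hchain, rfl⟩ := hl
  obtain ⟨q, L, rfl⟩ := List.exists_cons_of_ne_nil hL
  have hpne := (isPath_of_mem_edgesQ' hp).1
  have hqne := (isPath_of_mem_edgesQ' (hedges q List.mem_cons_self)).1
  have hjoin := ((isPath_append_iff hpne (by simp [hqne])).1 hpl).2.2
  rw [List.flatten_cons, src?_append_of_ne_nil _ hqne] at hjoin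
  refine ⟨p :: q :: L, List.cons_ne_nil _ _, ?_, List.isChain_cons_cons.2 ⟨hjoin, hchain⟩, rfl⟩
  rintro r (_ | ⟨_, hr⟩)
  exacts [hp, hedges r hr]

lemma isPathQ'_of_forall_not_mem_startSet {l : List E} (hl : IsPath s t l)
    (hS : ∀ a ∈ l, a ∉ startSet s t m) : IsPathQ' s t m l := by
  induction l with
  | nil => exact absurd rfl hl.1
  | cons a l ih =>
    have ha : [a] ∈ edgesQ' s t m := singleton_mem_edgesQ'_iff.2 (hS a List.mem_cons_self)
    rcases eq_or_ne l [] with rfl | hne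
    · exact isPathQ'_of_mem_edgesQ' ha
    have htail := ((isPath_append_iff (List.cons_ne_nil a []) hne).1 hl).2.1
    exact IsPathQ'.edge_append ha (ih htail fun b hb => hS b (List.mem_cons_of_mem _ hb)) hl

lemma not_isPathQ'_singleton {a : E} (ha : a ∈ startSet s t m) : ¬IsPathQ' s t m [a] := by
  rintro ⟨_ | ⟨p, L⟩, hL, hedges, -, hflat⟩
  · exact hL rfl
  have hp := hedges p List.mem_cons_self
  rw [List.flatten_cons, List.append_eq_singleton_iff] at hflat
  rcases hflat with ⟨rfl, -⟩ | ⟨rfl, -⟩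
  · exact (isPath_of_mem_edgesQ' hp).1 rfl
  · exact singleton_mem_edgesQ'_iff.1 hp ha

-- Prepending `a :: u` to a witness `b :: x` of `b ∈ S` would give a path longer than `m`.
lemma not_mem_startSet_of_mem_tail (hm : ∀ l, IsPath s t l → l.length ≤ m) {a b : E}
    {l : List E} (hl : IsPath s t (a :: l)) (hb : b ∈ l) : b ∉ startSet s t m := by
  rintro ⟨x, -, hbx, hlen⟩
  obtain ⟨u, w, rfl⟩ := List.append_of_mem hb
  have hsplit := (isPath_append_iff (List.cons_ne_nil a u) (List.cons_ne_nil b w)).1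
    (by simpa using hl)
  have hlong : IsPath s t ((a :: u) ++ b :: x) :=
    (isPath_append_iff (List.cons_ne_nil a u) (List.cons_ne_nil b x)).2
      ⟨hsplit.1, hbx, hsplit.2.2⟩
  have := hm _ hlong
  simp only [List.length_append, List.length_cons] at this hlen
  omega

lemma IsPath.mem_startSet_or_isPathQ' (hm : ∀ l, IsPath s t l → l.length ≤ m) {l : List E}
    (hl : IsPath s t l) : (∃ a ∈ startSet s t m, l = [a]) ∨ IsPathQ' s t m l := by
  obtain ⟨a, r, rfl⟩ := List.exists_cons_of_ne_nil hl.1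
  have htail : ∀ b ∈ r, b ∉ startSet s t m := fun b => not_mem_startSet_of_mem_tail hm hl
  by_cases ha : a ∈ startSet s t m
  · rcases r with _ | ⟨b, _ | ⟨c, r⟩⟩
    · exact .inl ⟨a, ha, rfl⟩
    · exact .inr (isPathQ'_of_mem_edgesQ' (.inr ⟨a, b, ha, hl, rfl⟩))
    · have hsplit := (isPath_append_iff (l₁ := [a, b]) (by simp) (List.cons_ne_nil c r)).1 hl
      exact .inr (IsPathQ'.edge_append (.inr ⟨a, b, ha, hsplit.1, rfl⟩)
        (isPathQ'_of_forall_not_mem_startSet hsplit.2.1 fun x hx => htail x (by simp [hx])) hl)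
  · refine .inr (isPathQ'_of_forall_not_mem_startSet hl ?_)
    rintro b (_ | ⟨_, hb⟩)
    exacts [ha, htail b hb]

end QuiverQ'

theorem pathQ_eq_startSet_disjUnion_pathQ'_general (s t : E → V)
    (m : ℕ) (hm : IsMaxPathLen s t m) :
    ({l : List E | IsPath s t l} =
      {l : List E | ∃ a ∈ startSet s t m, l = [a]} ∪ {l : List E | IsPathQ' s t m l}) ∧
    (∀ l : List E, ¬((∃ a ∈ startSet s t m, l = [a]) ∧ IsPathQ' s t m l)) := by
  refine ⟨Set.ext fun l => ⟨fun hl => hl.mem_startSet_or_isPathQ' hm.2, ?_⟩, ?_⟩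
  · rintro (⟨a, -, rfl⟩ | hl)
    exacts [isPath_singleton a, hl.isPath]
  · rintro l ⟨⟨a, ha, rfl⟩, hl⟩
    exact not_isPathQ'_singleton ha hl

/-- For a finite quiver `Q` without cycles of length `m`, `Path(Q)` is
the disjoint union of the starting set `S` (regarded as paths of length one) and
`Path(Q')`. -/
theorem pathQ_eq_startSet_disjUnion_pathQ' [Finite V] [Finite E] (s t : E → V)
    (hQ : NoCycles s t) (m : ℕ) (hm : IsMaxPathLen s t m) :
    ({l : List E | IsPath s t l} =
      {l : List E | ∃ a ∈ startSet s t m, l = [a]} ∪ {l : List E | IsPathQ' s t m l}) ∧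
    (∀ l : List E, ¬((∃ a ∈ startSet s t m, l = [a]) ∧ IsPathQ' s t m l)) :=
  pathQ_eq_startSet_disjUnion_pathQ'_general s t m hm

end
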